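/- For integers 1 ≤ M < N, the function x ↦ Res(∑_{i=M+1}^{N−1} x_{i,i+1}) restricted to the subgroup GL_M(O) ⋉ U_{M,N}(F) = { ĝ · u : g ∈ GL_M(O), u ∈ U_{M,N}(F) } of GL_N(F) is a group homomorphism to (ℂ, +), and on an element ĝ · u its value equals χ_{M,N}(u). -/
import Mathlib


/-!
Common setup: `Fld = ℂ((t))` is the field of formal Laurent series, with `O = ℂ[[t]]`
identified with the Laurent series whose coefficients in negative degrees vanish.
Matrices are indexed by `Fin N` (0-based), corresponding to the 1-based indices
`{1, …, N}` of the paper via `i ↦ i + 1`.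
-/

open Matrix
open scoped BigOperators

noncomputable section

/-- The field `F = ℂ((t))` of formal Laurent series. -/
abbrev Fld : Type := LaurentSeries ℂ

/-- `f ∈ t^k·O`: all coefficients in degrees `< k` vanish. -/
def inTO (k : ℤ) (f : Fld) : Prop := ∀ n : ℤ, n < k → f.coeff n = 0

/-- `f ∈ O = ℂ[[t]]`. -/
def inO (f : Fld) : Prop := inTO 0 f

/-- The residue `Res(∑ aᵢ tⁱ) = a₋₁`. -/
def Res (f : Fld) : ℂ := f.coeff (-1)

/-- Membership in `GL_n(O) ⊂ GL_n(F)`: both the matrix and its inverse have all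
entries in `O`. -/
def inGLO {n : ℕ} (x : GL (Fin n) Fld) : Prop :=
  (∀ i j, inO ((x : Matrix (Fin n) (Fin n) Fld) i j)) ∧
  (∀ i j, inO (((x⁻¹ : GL (Fin n) Fld) : Matrix (Fin n) (Fin n) Fld) i j))

/-- Membership in `U_{M,N}(F)` (0-based indices): `u_{ii} = 1`, `u_{ij} = 0` for `i > j`,
`u_{ij} = 0` for `i < j` with `j ≤ M` (i.e. 1-based `j ≤ M+1`), and `u_{ij}` arbitrary
for `i < j` with `j ≥ M+1` (i.e. 1-based `j ≥ M+2`). -/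
def Umem (M N : ℕ) (u : Matrix (Fin N) (Fin N) Fld) : Prop :=
  (∀ i, u i i = 1) ∧
  (∀ i j : Fin N, (j : ℕ) < (i : ℕ) → u i j = 0) ∧
  (∀ i j : Fin N, (i : ℕ) < (j : ℕ) → (j : ℕ) ≤ M → u i j = 0)

/-- The character `χ_{M,N}(u) = Res (∑_{i=M+1}^{N-1} u_{i,i+1})` (the sum written in
0-based indices: over `i ≥ M` with `j = i + 1 < N`). -/
def chi (M N : ℕ) (u : Matrix (Fin N) (Fin N) Fld) : ℂ :=
  Res (∑ i : Fin N, ∑ j : Fin N,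
    if M ≤ (i : ℕ) ∧ (j : ℕ) = (i : ℕ) + 1 then u i j else 0)

/-- The block-diagonal embedding `g ↦ ĝ = diag(g, I_{N-M})` of `M×M` matrices into
`N×N` matrices. -/
def emb (M N : ℕ) (g : Matrix (Fin M) (Fin M) Fld) : Matrix (Fin N) (Fin N) Fld :=
  fun i j =>
    if hi : (i : ℕ) < M then
      (if hj : (j : ℕ) < M then g ⟨i, hi⟩ ⟨j, hj⟩ else 0)
    else (if (i : ℕ) = (j : ℕ) then 1 else 0)

/-- The product set `P = GL_M(O) ⋉ U_{M,N}(F) = { ĝ · u : g ∈ GL_M(O), u ∈ U_{M,N}(F) }`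
inside the `N×N` matrices over `F`. -/
def Pset (M N : ℕ) : Set (Matrix (Fin N) (Fin N) Fld) :=
  { x | ∃ g : GL (Fin M) Fld, inGLO g ∧
        ∃ u : Matrix (Fin N) (Fin N) Fld, Umem M N u ∧
          x = emb M N (g : Matrix (Fin M) (Fin M) Fld) * u }

lemma emb_mul_eq {M N : ℕ} (g : Matrix (Fin M) (Fin M) Fld)
    (u : Matrix (Fin N) (Fin N) Fld) (i j : Fin N) (hi : M ≤ (i : ℕ)) :
    (emb M N g * u) i j = u i j := by
  rw [Matrix.mul_apply, Finset.sum_eq_single i]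
  · simp [emb, Nat.not_lt.mpr hi]
  · intro k _ hk
    have h0 : emb M N g i k = 0 := by
      simp only [emb, dif_neg (Nat.not_lt.mpr hi)]
      exact if_neg fun h => hk (Fin.ext h.symm)
    simp [h0]
  · exact fun h => absurd (Finset.mem_univ i) h

lemma prod_entry {M N : ℕ} (g h : Matrix (Fin M) (Fin M) Fld)
    {u v : Matrix (Fin N) (Fin N) Fld} (hu : Umem M N u) (hv : Umem M N v)
    (i j : Fin N) (hi : M ≤ (i : ℕ)) (hj : (j : ℕ) = (i : ℕ) + 1) :
    ((emb M N g * u) * (emb M N h * v)) i j = u i j + v i j := by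
  have hij : i ≠ j := fun e => by have := congrArg Fin.val e; omega
  rw [Matrix.mul_apply]
  rw [Finset.sum_eq_add i j hij]
  · rw [emb_mul_eq g u i i hi, emb_mul_eq g u i j hi, emb_mul_eq h v i j hi,
      emb_mul_eq h v j j (by omega), hu.1 i, hv.1 j, one_mul, mul_one, add_comm]
  · intro k _ ⟨hki, hkj⟩
    rw [emb_mul_eq g u i k hi]
    rcases lt_trichotomy (k : ℕ) (i : ℕ) with hlt | heq | hgt
    · rw [hu.2.1 i k hlt, zero_mul]
    · exact absurd (Fin.ext heq) hki
    · rw [emb_mul_eq h v k j (by omega), hv.2.1 k j (by omega), mul_zero]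
  · exact fun h => absurd (Finset.mem_univ i) h
  · exact fun h => absurd (Finset.mem_univ j) h

lemma chi_emb_mul {M N : ℕ} (g : Matrix (Fin M) (Fin M) Fld)
    (u : Matrix (Fin N) (Fin N) Fld) :
    chi M N (emb M N g * u) = chi M N u := by
  unfold chi
  congr 1
  refine Finset.sum_congr rfl fun i _ => Finset.sum_congr rfl fun j _ => ?_
  split
  · next hc => exact emb_mul_eq g u i j hc.1
  · rfl

/-- For `1 ≤ M < N`, the map `x ↦ Res (∑_{i=M+1}^{N-1} x_{i,i+1})`
(which is exactly `chi M N`), restricted to the subgroup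
`GL_M(O) ⋉ U_{M,N}(F) = { ĝ·u }` of `GL_N(F)`, is a group homomorphism to `(ℂ, +)`,
and its value on an element `ĝ · u` equals `χ_{M,N}(u)`. -/
theorem statement5 (M N : ℕ) (hM : 1 ≤ M) (hMN : M < N) :
    (∀ x ∈ Pset M N, ∀ y ∈ Pset M N, chi M N (x * y) = chi M N x + chi M N y) ∧
    (∀ g : GL (Fin M) Fld, inGLO g →
      ∀ u : Matrix (Fin N) (Fin N) Fld, Umem M N u →
        chi M N (emb M N (g : Matrix (Fin M) (Fin M) Fld) * u) = chi M N u) := by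
  constructor
  · rintro x ⟨g, -, u, hu, rfl⟩ y ⟨h, -, v, hv, rfl⟩
    rw [chi_emb_mul, chi_emb_mul]
    have hsum : (∑ i : Fin N, ∑ j : Fin N,
        if M ≤ (i : ℕ) ∧ (j : ℕ) = (i : ℕ) + 1 then
          ((emb M N (g : Matrix (Fin M) (Fin M) Fld) * u) *
            (emb M N (h : Matrix (Fin M) (Fin M) Fld) * v)) i j else 0)
        = (∑ i : Fin N, ∑ j : Fin N,
            if M ≤ (i : ℕ) ∧ (j : ℕ) = (i : ℕ) + 1 then u i j else 0)
          + (∑ i : Fin N, ∑ j : Fin N,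
            if M ≤ (i : ℕ) ∧ (j : ℕ) = (i : ℕ) + 1 then v i j else 0) := by
      rw [← Finset.sum_add_distrib]
      refine Finset.sum_congr rfl fun i _ => ?_
      rw [← Finset.sum_add_distrib]
      refine Finset.sum_congr rfl fun j _ => ?_
      split
      · next hc => exact prod_entry _ _ hu hv i j hc.1 hc.2
      · rw [add_zero]
    unfold chi
    rw [hsum]
    simp [Res]
  · intro g _ u _
    exact chi_emb_mul _ u
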